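/- Let n ≥ 1, let 1 ≤ m < n, and let w, u be permutations of {1,2,…,n} with w →^{r_m} u. Then the maximum of the set {w(1), w(2), …, w(m)} ∪ {w(b) : m < b ≤ n and w(b) > u(b)} equals the maximum of {u(1), u(2), …, u(m)}. -/

import Mathlib

/-- The length (number of inversions) of a permutation of `Fin n`
(representing `{1,…,n}` with `i : Fin n` standing for `i+1`). -/
def invLength {n : ℕ} (w : Equiv.Perm (Fin n)) : ℕ :=
  (Finset.univ.filter fun p : Fin n × Fin n => p.1 < p.2 ∧ w p.2 < w p.1).card

/-- `w τ_{a₁b₁} ⋯ τ_{aₛbₛ}` for the list of pairs `L = [(a₁,b₁),…,(aₛ,bₛ)]`. -/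
def chainProd {n : ℕ} (w : Equiv.Perm (Fin n)) (L : List (Fin n × Fin n)) :
    Equiv.Perm (Fin n) :=
  w * (L.map fun p => Equiv.swap p.1 p.2).prod

/-- The list `L = [(a₁,b₁),…,(aₛ,bₛ)]` is a chain witnessing `w ≤ₘ u`:
each `aᵢ ≤ m < bᵢ` (in 1-indexed terms, i.e. `(aᵢ : ℕ) < m ≤ (bᵢ : ℕ)` in 0-indexed `Fin n`),
`u = w τ_{a₁b₁} ⋯ τ_{aₛbₛ}`, and `ℓ(w τ_{a₁b₁} ⋯ τ_{aᵢbᵢ}) = ℓ(w) + i` for all `i ≤ s`. -/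
def IsMChain {n : ℕ} (m : ℕ) (w u : Equiv.Perm (Fin n)) (L : List (Fin n × Fin n)) : Prop :=
  (∀ p ∈ L, (p.1 : ℕ) < m ∧ m ≤ (p.2 : ℕ)) ∧
  u = chainProd w L ∧
  ∀ i, i ≤ L.length → invLength (chainProd w (L.take i)) = invLength w + i

/-- The `m`-Bruhat order `w ≤ₘ u`. -/
def mBruhat {n : ℕ} (m : ℕ) (w u : Equiv.Perm (Fin n)) : Prop :=
  ∃ L, IsMChain m w u L

/-- `w →^{r_m} u` : as `w ≤ₘ u`, with the `bᵢ` pairwise distinct. -/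
def rmRel {n : ℕ} (m : ℕ) (w u : Equiv.Perm (Fin n)) : Prop :=
  ∃ L, IsMChain m w u L ∧ (L.map Prod.snd).Nodup

/-!
Write `A(v)` for the set of values of `v` at the first `m` positions. A step `v ↦ v τ_{ab}` of an
`m`-chain raises the length by exactly one, which forces `v a < v b` (transposing a descent would
lower the length), and it replaces `v a` by `v b` in `A`. So the maximum of `A(v) ∪ v(B)`, where `B`
is the set of targets `bᵢ` still to come, does not change along the chain: the only value lost is
`v a`, and `v b` stays. At the end of the chain it is `max A(u)`. When the `bᵢ` are distinct, each
position `b ≥ m` is moved at most once, downwards, so `B` for the whole chain is exactly the set of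
`b ≥ m` with `u b < w b`.
-/

open Equiv Finset

lemma Finset.image_comp_swap_of_mem {α β : Type*} [DecidableEq α] [DecidableEq β] (f : α → β)
    {s : Finset α} {a b : α} (ha : a ∈ s) (hb : b ∈ s) :
    s.image (f ∘ swap a b) = s.image f := by
  rw [← image_image, ← (swap a b).coe_toEmbedding, ← map_eq_image, map_perm]
  intro x hx
  obtain ⟨-, rfl | rfl⟩ := swap_apply_ne_self_iff.1 hx <;> assumption

lemma Finset.max_insert_of_lt_mem {α : Type*} [LinearOrder α] {s : Finset α} {x y : α}
    (hy : y ∈ s) (hxy : x < y) : (insert x s).max = s.max := by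
  rw [max_insert]
  exact max_eq_right ((WithBot.coe_le_coe.2 hxy.le).trans (le_max hy))

lemma swap_lt_swap_of_lt {α : Type*} [LinearOrder α] {a b i j : α} (hab : a < b) (hij : i < j) (h : i < a ∨ b < j) :
    swap a b i < swap a b j := by
  rcases h with h | h <;> (simp only [swap_apply_def]; split_ifs <;> grind)

lemma not_le_swap_and_swap_le {α : Type*} [LinearOrder α] {a b i j : α} (hab : a < b) (h : ¬(a ≤ i ∧ j ≤ b)) :
    ¬(a ≤ swap a b i ∧ swap a b j ≤ b) := by
  simp only [swap_apply_def]; split_ifs <;> grind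

section Inversions

variable {n : ℕ}

def inversions (v : Perm (Fin n)) : Finset (Fin n × Fin n) :=
  univ.filter fun p => p.1 < p.2 ∧ v p.2 < v p.1

lemma mem_inversions {v : Perm (Fin n)} {p : Fin n × Fin n} :
    p ∈ inversions v ↔ p.1 < p.2 ∧ v p.2 < v p.1 := by
  simp [inversions]

lemma card_inversions (v : Perm (Fin n)) : (inversions v).card = invLength v := rfl

/-- `(a, b)` becomes an inversion, pairs inside `[a, b]` that were inversions stay so, and any other
inversion `(i, j)` of `v` gives the inversion `(τ i, τ j)` of `v τ`. -/
lemma invLength_lt_invLength_mul_swap (v : Perm (Fin n)) {a b : Fin n} (hab : a < b)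
    (hv : v a < v b) : invLength v < invLength (v * swap a b) := by
  let F : Fin n × Fin n → Fin n × Fin n := fun p =>
    if a ≤ p.1 ∧ p.2 ≤ b then p else (swap a b p.1, swap a b p.2)
  have hF : Function.Involutive F := by
    intro p
    by_cases hp : a ≤ p.1 ∧ p.2 ≤ b
    · simp [F, hp]
    · simp [F, hp, not_le_swap_and_swap_le hab hp]
  have hmaps : ∀ p ∈ insert (a, b) (inversions v), F p ∈ inversions (v * swap a b) := by
    intro p hp
    rw [mem_insert, mem_inversions] at hp
    rw [mem_inversions]
    by_cases hin : a ≤ p.1 ∧ p.2 ≤ b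
    · simp only [F, hin, Perm.mul_apply, swap_apply_def]
      rcases hp with rfl | hp
      · simp [hab.ne', hab, hv]
      · split_ifs <;> grind
    · have hp' : p.1 < p.2 ∧ v p.2 < v p.1 := hp.resolve_left (by rintro rfl; simp_all)
      simp only [F, hin, if_false, Perm.mul_apply, swap_apply_self]
      refine ⟨swap_lt_swap_of_lt hab hp'.1 ?_, hp'.2⟩
      contrapose! hin
      exact hin
  have hab_notMem : (a, b) ∉ inversions v := by
    simp [mem_inversions, hv.le]
  calc invLength v < (insert (a, b) (inversions v)).card := by
        rw [card_insert_of_notMem hab_notMem, card_inversions]; omega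
    _ ≤ invLength (v * swap a b) := card_le_card_of_injOn F hmaps hF.injective.injOn

lemma lt_of_invLength_mul_swap_eq_succ (v : Perm (Fin n)) {a b : Fin n} (hab : a < b)
    (h : invLength (v * swap a b) = invLength v + 1) : v a < v b := by
  by_contra! hba
  have hne : v b ≠ v a := v.injective.ne hab.ne'
  have := invLength_lt_invLength_mul_swap (v * swap a b) hab (by simpa using lt_of_le_of_ne hba hne)
  rw [mul_assoc, swap_mul_self, mul_one] at this
  omega

end Inversions

section Chains

variable {n m : ℕ} {w u : Perm (Fin n)} {p : Fin n × Fin n} {L : List (Fin n × Fin n)}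

lemma chainProd_nil (w : Perm (Fin n)) : chainProd w [] = w := by
  simp [chainProd]

lemma chainProd_cons (w : Perm (Fin n)) (p : Fin n × Fin n) (L : List (Fin n × Fin n)) :
    chainProd w (p :: L) = chainProd (w * swap p.1 p.2) L := by
  simp [chainProd, mul_assoc]

namespace IsMChain

lemma eq_of_nil (h : IsMChain m w u []) : u = w := by
  rw [h.2.1, chainProd_nil]

lemma le_snd (h : IsMChain m w u L) (hp : p ∈ L) : m ≤ (p.2 : ℕ) :=
  (h.1 p hp).2

lemma fst_lt (h : IsMChain m w u L) (hp : p ∈ L) : (p.1 : ℕ) < m :=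
  (h.1 p hp).1

lemma tail (h : IsMChain m w u (p :: L)) : IsMChain m (w * swap p.1 p.2) u L := by
  obtain ⟨hbounds, rfl, hlen⟩ := h
  refine ⟨fun q hq => hbounds q (List.mem_cons_of_mem p hq), chainProd_cons .., fun i hi => ?_⟩
  have h1 := hlen 1 (by simp)
  have hi1 := hlen (i + 1) (by simpa using hi)
  simp only [List.take_succ_cons, List.take_zero, chainProd_cons, chainProd_nil] at h1 hi1
  omega

lemma fst_lt_snd (h : IsMChain m w u L) (hp : p ∈ L) : p.1 < p.2 :=
  Fin.lt_def.2 ((h.fst_lt hp).trans_le (h.le_snd hp))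

lemma apply_fst_lt_apply_snd (h : IsMChain m w u (p :: L)) : w p.1 < w p.2 := by
  refine lt_of_invLength_mul_swap_eq_succ w (h.fst_lt_snd List.mem_cons_self) ?_
  simpa [chainProd] using h.2.2 1 (by simp)

lemma apply_eq_of_notMem {b : Fin n} (h : IsMChain m w u L) (hb : m ≤ (b : ℕ))
    (hbL : b ∉ L.map Prod.snd) : u b = w b := by
  induction L generalizing w with
  | nil => rw [h.eq_of_nil]
  | cons p L ih =>
    simp only [List.map_cons, List.mem_cons, not_or] at hbL
    have hba : b ≠ p.1 := by have := h.fst_lt List.mem_cons_self; rintro rfl; omega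
    rw [ih h.tail hbL.2, Perm.mul_apply, swap_apply_of_ne_of_ne hba hbL.1]

lemma apply_lt_of_mem {b : Fin n} (h : IsMChain m w u L) (hnd : (L.map Prod.snd).Nodup)
    (hbL : b ∈ L.map Prod.snd) : u b < w b := by
  induction L generalizing w with
  | nil => simp at hbL
  | cons p L ih =>
    rw [List.map_cons, List.nodup_cons] at hnd
    rcases List.mem_cons.1 hbL with rfl | hbL
    · rw [h.tail.apply_eq_of_notMem (h.le_snd List.mem_cons_self) hnd.1, Perm.mul_apply,
        swap_apply_right]
      exact h.apply_fst_lt_apply_snd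
    · obtain ⟨q, hq, rfl⟩ := List.mem_map.1 hbL
      have hqa : q.2 ≠ p.1 := by
        have := h.fst_lt List.mem_cons_self; have := h.tail.le_snd hq; omega
      have hqb : q.2 ≠ p.2 := by rintro hqp; exact hnd.1 (hqp ▸ hbL)
      simpa [swap_apply_of_ne_of_ne hqa hqb] using ih h.tail hnd.2 hbL

lemma max_image_eq (h : IsMChain m w u L) :
    (((univ.filter fun a : Fin n => (a : ℕ) < m) ∪ (L.map Prod.snd).toFinset).image w).max
      = ((univ.filter fun a : Fin n => (a : ℕ) < m).image u).max := by
  induction L generalizing w with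
  | nil => simp [h.eq_of_nil]
  | cons p L ih =>
    set A := univ.filter fun a : Fin n => (a : ℕ) < m
    have hpa : p.1 ∈ A := by simpa [A] using h.fst_lt List.mem_cons_self
    have hset : (A ∪ ((p :: L).map Prod.snd).toFinset).image w
        = insert (w p.1) ((A ∪ (L.map Prod.snd).toFinset).image (w * swap p.1 p.2)) := by
      rw [← Finset.image_comp_swap_of_mem (b := p.2) w (mem_union_left _ hpa) (by simp)]
      simp [union_insert, image_insert, Perm.coe_mul]
    rw [hset, Finset.max_insert_of_lt_mem _ h.apply_fst_lt_apply_snd, ih h.tail]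
    exact mem_image.2 ⟨p.1, mem_union_left _ hpa, by simp⟩

end IsMChain

end Chains

theorem stmt7_general (n m : ℕ)
    (w u : Equiv.Perm (Fin n)) (h : rmRel m w u) :
    ((Finset.univ.filter fun a : Fin n => (a : ℕ) < m).image w ∪
      (Finset.univ.filter fun b : Fin n => m ≤ (b : ℕ) ∧ u b < w b).image w).max
      = ((Finset.univ.filter fun a : Fin n => (a : ℕ) < m).image u).max := by
  obtain ⟨L, hL, hnd⟩ := h
  have htargets : (univ.filter fun b : Fin n => m ≤ (b : ℕ) ∧ u b < w b)
      = (L.map Prod.snd).toFinset := by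
    ext b
    simp only [mem_filter, mem_univ, true_and, List.mem_toFinset]
    constructor
    · rintro ⟨hb, hlt⟩
      by_contra hbL
      exact hlt.ne (hL.apply_eq_of_notMem hb hbL)
    · intro hbL
      obtain ⟨q, hq, rfl⟩ := List.mem_map.1 hbL
      exact ⟨hL.le_snd hq, hL.apply_lt_of_mem hnd hbL⟩
  rw [htargets, ← image_union]
  exact hL.max_image_eq

/-- if `w →^{r_m} u` then
`max ({w(1),…,w(m)} ∪ {w(b) : m < b ≤ n, w(b) > u(b)}) = max {u(1),…,u(m)}`. -/
theorem stmt7 (n m : ℕ) (hn : 1 ≤ n) (hm : 1 ≤ m) (hmn : m < n)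
    (w u : Equiv.Perm (Fin n)) (h : rmRel m w u) :
    ((Finset.univ.filter fun a : Fin n => (a : ℕ) < m).image w ∪
      (Finset.univ.filter fun b : Fin n => m ≤ (b : ℕ) ∧ u b < w b).image w).max
      = ((Finset.univ.filter fun a : Fin n => (a : ℕ) < m).image u).max :=
  stmt7_general n m w u h
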